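/- Let ξ be the random variable with independent Q̃-symbols. If P̃ has infinitely many columns with a zero entry and ∑_{k=1}^∞ ∑_{i: p_{ik}=0} q_{ik} < ∞, then the topological support of μ_ξ is nowhere dense, yet μ_ξ is supported by a set P such that for every x ∈ P and every ε > 0 the set P ∩ (x−ε, x+ε) has positive Lebesgue measure (μ_ξ is of pure P-type). -/

import Mathlib

open MeasureTheory Filter Finset Topology

/-- The coding map of the `Q̃`-representation: it sends a digit sequence
`ω`, with `k`-th digit in `{0, 1, ..., N k}`, to the point of `[0,1]` given by
formula (5) of the paper: `x = ∑_k D_k(x) L_{k-1}(x)`, i.e. the unique point in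
the intersection of the nested cylinder intervals `Δ_{ω₁...ω_k}`. -/
noncomputable def codingMap (N : ℕ → ℕ) (q : (k : ℕ) → Fin (N k + 1) → ℝ)
    (ω : (k : ℕ) → Fin (N k + 1)) : ℝ :=
  ∑' k : ℕ, (∑ j : Fin (N k + 1), if (j : ℕ) < (ω k : ℕ) then q k j else 0) *
    ∏ s ∈ Finset.range k, q s (ω s)

/-- `Γ_{Q̃(V)}`: the set of points of `[0,1]` admitting a `Q̃`-representation
whose `k`-th digit lies in `V k` for every `k`. -/
noncomputable def QtSet (N : ℕ → ℕ) (q : (k : ℕ) → Fin (N k + 1) → ℝ)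
    (V : (k : ℕ) → Finset (Fin (N k + 1))) : Set ℝ :=
  codingMap N q '' {ω | ∀ k, ω k ∈ V k}

/-- The topological support of a measure on `ℝ`: the set of points all of whose
neighbourhoods have positive measure.  It is the smallest closed set of full
measure. -/
def msupport (μ : Measure ℝ) : Set ℝ :=
  {x : ℝ | ∀ ε > 0, μ (Set.Ioo (x - ε) (x + ε)) ≠ 0}

/-!
Let `V k` be the digits of positive `p`-probability and `P = Γ_{Q̃(V)}`. Almost every digit
sequence avoids the null digits, so `μ_ξ` is carried by `P`, which is compact as the continuous
image of a closed set of sequences; hence the support of `μ_ξ` lies in `P`. Infinitely many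
columns exclude a digit, so every cylinder interval contains a smaller one whose interior misses
`P`: `P` has empty interior. Conversely, a point of the cylinder `Δ_{ω₁…ωₙ}` missing `P` lies in
a subcylinder with an excluded `k`-th digit for some `k ≥ n`; these have total length
`|Δ_{ω₁…ωₙ}| ∑_{k ≥ n} ∑_{i ∉ V k} q_{ik}`, which for large `n` is less than `|Δ_{ω₁…ωₙ}|`,
so `P` meets every neighbourhood of each of its points in positive measure.
-/

namespace QExpansion

abbrev DigitSeq (N : ℕ → ℕ) : Type := (k : ℕ) → Fin (N k + 1)

variable {N : ℕ → ℕ}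

def cumMass (q : (k : ℕ) → Fin (N k + 1) → ℝ) (k t : ℕ) : ℝ :=
  ∑ j : Fin (N k + 1), if (j : ℕ) < t then q k j else 0

def cylLength (q : (k : ℕ) → Fin (N k + 1) → ℝ) (n : ℕ) (ω : DigitSeq N) : ℝ :=
  ∏ s ∈ range n, q s (ω s)

def cylLeft (q : (k : ℕ) → Fin (N k + 1) → ℝ) (n : ℕ) (ω : DigitSeq N) : ℝ :=
  ∑ k ∈ range n, cumMass q k (ω k) * cylLength q k ω

/-- The paper's cylinder interval `Δ_{ω₁…ωₙ}`; digits are indexed from `0` here. -/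
def cylinder (q : (k : ℕ) → Fin (N k + 1) → ℝ) (n : ℕ) (ω : DigitSeq N) : Set ℝ :=
  Set.Icc (cylLeft q n ω) (cylLeft q n ω + cylLength q n ω)

def seqCylinder (n : ℕ) (ω : DigitSeq N) : Set (DigitSeq N) :=
  {ω' | ∀ k < n, ω' k = ω k}

lemma isOpen_seqCylinder (n : ℕ) (ω : DigitSeq N) : IsOpen (seqCylinder n ω) :=
  isOpen_set_pi (s := fun k => {ω k}) (Set.finite_Iio n) fun _ _ => isOpen_discrete _

lemma isClosed_seqCylinder (n : ℕ) (ω : DigitSeq N) : IsClosed (seqCylinder n ω) := by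
  simp only [seqCylinder, Set.ofPred_forall]
  exact isClosed_iInter fun k => isClosed_iInter fun _ =>
    isClosed_eq (continuous_apply k) continuous_const

lemma update_mem_seqCylinder {n : ℕ} {ω ω' : DigitSeq N} (h : ω' ∈ seqCylinder n ω) :
    ω' ∈ seqCylinder (n + 1) (Function.update ω n (ω' n)) := by
  intro k hk
  rcases Nat.lt_succ_iff_lt_or_eq.1 hk with hk | rfl
  · rw [Function.update_of_ne hk.ne, h k hk]
  · rw [Function.update_self]

lemma update_mem_seqCylinder_self {n m : ℕ} (hnm : n ≤ m) (ω : DigitSeq N) (d : Fin (N m + 1)) :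
    Function.update ω m d ∈ seqCylinder n ω :=
  fun _ hk => Function.update_of_ne (by omega) _ _

variable (q : (k : ℕ) → Fin (N k + 1) → ℝ)

lemma cumMass_succ (k : ℕ) (j : Fin (N k + 1)) :
    cumMass q k (j + 1) = cumMass q k j + q k j := by
  have hsplit : ∀ i : Fin (N k + 1), (if (i : ℕ) < j + 1 then q k i else 0) =
      (if (i : ℕ) < j then q k i else 0) + if j = i then q k i else 0 := by
    intro i
    split_ifs <;> simp_all [Fin.ext_iff] <;> omega
  simp only [cumMass, sum_congr rfl fun i _ => hsplit i, sum_add_distrib, sum_ite_eq, mem_univ,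
    if_true]

lemma cylLength_congr {n : ℕ} {ω ω' : DigitSeq N} (h : ω' ∈ seqCylinder n ω) :
    cylLength q n ω' = cylLength q n ω :=
  prod_congr rfl fun s hs => by rw [h s (mem_range.1 hs)]

lemma cylLeft_congr {n : ℕ} {ω ω' : DigitSeq N} (h : ω' ∈ seqCylinder n ω) :
    cylLeft q n ω' = cylLeft q n ω := by
  refine sum_congr rfl fun k hk => ?_
  have hkn := mem_range.1 hk
  rw [h k hkn, cylLength_congr q fun s hs => h s (hs.trans hkn)]

lemma cylinder_congr {n : ℕ} {ω ω' : DigitSeq N} (h : ω' ∈ seqCylinder n ω) :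
    cylinder q n ω' = cylinder q n ω := by
  rw [cylinder, cylinder, cylLeft_congr q h, cylLength_congr q h]

lemma cylLength_succ (n : ℕ) (ω : DigitSeq N) :
    cylLength q (n + 1) ω = cylLength q n ω * q n (ω n) :=
  prod_range_succ _ _

lemma cylLeft_succ (n : ℕ) (ω : DigitSeq N) :
    cylLeft q (n + 1) ω = cylLeft q n ω + cumMass q n (ω n) * cylLength q n ω :=
  sum_range_succ _ _

lemma cylLength_update (n : ℕ) (ω : DigitSeq N) (d : Fin (N n + 1)) :
    cylLength q (n + 1) (Function.update ω n d) = cylLength q n ω * q n d := by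
  rw [cylLength_succ, cylLength_congr q (update_mem_seqCylinder_self le_rfl ω d),
    Function.update_self]

lemma cylLeft_update (n : ℕ) (ω : DigitSeq N) (d : Fin (N n + 1)) :
    cylLeft q (n + 1) (Function.update ω n d) =
      cylLeft q n ω + cumMass q n d * cylLength q n ω := by
  have h := update_mem_seqCylinder_self le_rfl ω d
  rw [cylLeft_succ, cylLeft_congr q h, cylLength_congr q h, Function.update_self]

lemma continuous_digit (k : ℕ) (f : Fin (N k + 1) → ℝ) :
    Continuous fun ω : DigitSeq N => f (ω k) :=
  continuous_of_discreteTopology.comp (continuous_apply k)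

lemma continuous_cylLength (n : ℕ) : Continuous (cylLength q n) :=
  continuous_finsetProd _ fun s _ => continuous_digit s (q s)

lemma continuous_cylLeft (n : ℕ) : Continuous (cylLeft q n) :=
  continuous_finsetSum _ fun k _ =>
    (continuous_digit k fun d => cumMass q k d).mul (continuous_cylLength q k)

lemma isClosed_setOf_mem_cylinder (n : ℕ) (y : ℝ) :
    IsClosed {ω : DigitSeq N | y ∈ cylinder q n ω} :=
  (isClosed_le (continuous_cylLeft q n) continuous_const).inter
    (isClosed_le continuous_const ((continuous_cylLeft q n).add (continuous_cylLength q n)))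

lemma volume_cylinder (n : ℕ) (ω : DigitSeq N) :
    volume (cylinder q n ω) = ENNReal.ofReal (cylLength q n ω) := by
  rw [cylinder, Real.volume_Icc, add_sub_cancel_left]

lemma cylinder_subset_Ioo {n : ℕ} {ω : DigitSeq N} {x ε : ℝ} (hx : x ∈ cylinder q n ω)
    (hε : cylLength q n ω < ε) : cylinder q n ω ⊆ Set.Ioo (x - ε) (x + ε) :=
  fun _ hy => ⟨by linarith [hx.2, hy.1], by linarith [hx.1, hy.2]⟩

def excludedMass (q : (k : ℕ) → Fin (N k + 1) → ℝ) (V : (k : ℕ) → Finset (Fin (N k + 1)))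
    (k : ℕ) : ℝ :=
  ∑ i ∈ (V k)ᶜ, q k i

def excludedPart (q : (k : ℕ) → Fin (N k + 1) → ℝ) (V : (k : ℕ) → Finset (Fin (N k + 1)))
    (n : ℕ) (ω : DigitSeq N) (k : ℕ) : Set ℝ :=
  ⋃ ω' ∈ seqCylinder n ω ∩ {ω' | ω' k ∉ V k}, cylinder q (k + 1) ω'

structure IsPositiveStochastic (q : (k : ℕ) → Fin (N k + 1) → ℝ) : Prop where
  pos : ∀ k i, 0 < q k i
  sum_eq_one : ∀ k, ∑ i, q k i = 1

lemma exists_mem_Icc_succ (b : ℕ → ℝ) {u : ℝ} :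
    ∀ n, b 0 ≤ u → u ≤ b (n + 1) → ∃ d ≤ n, u ∈ Set.Icc (b d) (b (d + 1))
  | 0, h₀, h₁ => ⟨0, le_rfl, h₀, h₁⟩
  | n + 1, h₀, h₁ => by
    by_cases h : b (n + 1) ≤ u
    · exact ⟨n + 1, le_rfl, h, h₁⟩
    · obtain ⟨d, hd, hu⟩ := exists_mem_Icc_succ b n h₀ (not_le.1 h).le
      exact ⟨d, hd.trans n.le_succ, hu⟩

section Cylinders

variable {q : (k : ℕ) → Fin (N k + 1) → ℝ} (hQ : IsPositiveStochastic q)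
include hQ

lemma cumMass_nonneg (k t : ℕ) : 0 ≤ cumMass q k t :=
  sum_nonneg fun i _ => by split_ifs <;> [exact (hQ.pos k i).le; rfl]

lemma cumMass_mono (k : ℕ) {t t' : ℕ} (h : t ≤ t') : cumMass q k t ≤ cumMass q k t' :=
  sum_le_sum fun i _ => by split_ifs <;> first | rfl | exact (hQ.pos k i).le | omega

lemma cumMass_top (k : ℕ) : cumMass q k (N k + 1) = 1 := by
  simp only [cumMass, Fin.is_lt, if_true]
  exact hQ.sum_eq_one k

lemma cumMass_add_le_one (k : ℕ) (j : Fin (N k + 1)) : cumMass q k j + q k j ≤ 1 := by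
  rw [← cumMass_succ, ← cumMass_top hQ k]
  exact cumMass_mono hQ k j.is_lt

lemma cylLength_pos (n : ℕ) (ω : DigitSeq N) : 0 < cylLength q n ω :=
  prod_pos fun s _ => hQ.pos s (ω s)

lemma cylLeft_le_succ (n : ℕ) (ω : DigitSeq N) : cylLeft q n ω ≤ cylLeft q (n + 1) ω := by
  rw [cylLeft_succ]
  have := mul_nonneg (cumMass_nonneg hQ n (ω n)) (cylLength_pos hQ n ω).le
  linarith

lemma cylRight_succ_le (n : ℕ) (ω : DigitSeq N) :
    cylLeft q (n + 1) ω + cylLength q (n + 1) ω ≤ cylLeft q n ω + cylLength q n ω := by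
  rw [cylLeft_succ, cylLength_succ]
  nlinarith [cumMass_add_le_one hQ n (ω n), cylLength_pos hQ n ω]

lemma cylinder_antitone (ω : DigitSeq N) : Antitone (cylinder q · ω) :=
  antitone_nat_of_succ_le fun n =>
    Set.Icc_subset_Icc (cylLeft_le_succ hQ n ω) (cylRight_succ_le hQ n ω)

lemma cylLeft_mem_cylinder {m j : ℕ} (h : m ≤ j) (ω : DigitSeq N) :
    cylLeft q j ω ∈ cylinder q m ω :=
  cylinder_antitone hQ ω h ⟨le_rfl, by linarith [cylLength_pos hQ j ω]⟩

lemma hasSum_codingMap (ω : DigitSeq N) :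
    HasSum (fun k => cumMass q k (ω k) * cylLength q k ω) (codingMap N q ω) := by
  refine (summable_of_sum_range_le (c := 1)
    (fun k => mul_nonneg (cumMass_nonneg hQ k _) (cylLength_pos hQ k ω).le)
    fun n => ?_).hasSum
  simpa [cylinder, cylLeft, cylLength] using (cylLeft_mem_cylinder hQ n.zero_le ω).2

lemma codingMap_mem_cylinder (n : ℕ) (ω : DigitSeq N) : codingMap N q ω ∈ cylinder q n ω :=
  isClosed_Icc.mem_of_tendsto (hasSum_codingMap hQ ω).tendsto_sum_nat
    (eventually_atTop.2 ⟨n, fun _ hj => cylLeft_mem_cylinder hQ hj ω⟩)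

lemma cylLength_le_prod_iSup (n : ℕ) (ω : DigitSeq N) :
    cylLength q n ω ≤ ∏ k ∈ range n, ⨆ i, q k i :=
  prod_le_prod (fun s _ => (hQ.pos s (ω s)).le)
    fun s _ => le_ciSup (Set.finite_range (q s)).bddAbove (ω s)

lemma exists_update_mem_cylinder {m : ℕ} {ω : DigitSeq N} {y : ℝ} (hy : y ∈ cylinder q m ω) :
    ∃ d, y ∈ cylinder q (m + 1) (Function.update ω m d) := by
  obtain ⟨d, hdN, hd⟩ := exists_mem_Icc_succ
    (fun t => cylLeft q m ω + cumMass q m t * cylLength q m ω) (N m)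
    (by simpa [cumMass] using hy.1) (by simpa [cumMass_top hQ] using hy.2)
  refine ⟨⟨d, Nat.lt_succ_of_le hdN⟩, ?_⟩
  have hsucc := cumMass_succ q m ⟨d, Nat.lt_succ_of_le hdN⟩
  rw [cylinder, cylLeft_update, cylLength_update]
  exact ⟨hd.1, hd.2.trans_eq (by rw [hsucc]; ring)⟩

lemma mem_seqCylinder_of_codingMap_mem_Ioo {m : ℕ} {ω ω' : DigitSeq N}
    (h : codingMap N q ω' ∈ Set.Ioo (cylLeft q m ω) (cylLeft q m ω + cylLength q m ω)) :
    ω' ∈ seqCylinder m ω := by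
  induction m with
  | zero => exact fun _ hk => absurd hk (Nat.not_lt_zero _)
  | succ m ih =>
    have hpre : ω' ∈ seqCylinder m ω := ih
      ⟨(cylLeft_le_succ hQ m ω).trans_lt h.1, h.2.trans_le (cylRight_succ_le hQ m ω)⟩
    have hmem := codingMap_mem_cylinder hQ (m + 1) ω'
    rw [cylinder_congr q (update_mem_seqCylinder hpre), cylinder, cylLeft_update,
      cylLength_update] at hmem
    rw [cylLeft_succ, cylLength_succ] at h
    have hL := cylLength_pos hQ m ω
    -- the open subinterval of digit `ω m` is disjoint from the closed one of any other digit
    have hdigit : ω' m = ω m := by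
      refine Fin.ext (le_antisymm (not_lt.1 fun hlt => ?_) (not_lt.1 fun hlt => ?_))
      · have hB := cumMass_mono hQ m (Nat.succ_le_of_lt hlt)
        rw [cumMass_succ] at hB
        nlinarith [h.2, hmem.1]
      · have hB := cumMass_mono hQ m (Nat.succ_le_of_lt hlt)
        rw [cumMass_succ] at hB
        nlinarith [h.1, hmem.2]
    intro k hk
    rcases Nat.lt_succ_iff_lt_or_eq.1 hk with hk | rfl
    · exact hpre k hk
    · exact hdigit

lemma notMem_QtSet_of_mem_Ioo {V : (k : ℕ) → Finset (Fin (N k + 1))} {m : ℕ}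
    {ω : DigitSeq N} (hm : ω m ∉ V m) {y : ℝ}
    (hy : y ∈ Set.Ioo (cylLeft q (m + 1) ω) (cylLeft q (m + 1) ω + cylLength q (m + 1) ω)) :
    y ∉ QtSet N q V := by
  rintro ⟨ω', hω', rfl⟩
  exact hm (mem_seqCylinder_of_codingMap_mem_Ioo hQ hy m m.lt_succ_self ▸ hω' m)

lemma excludedMass_nonneg (V : (k : ℕ) → Finset (Fin (N k + 1))) (k : ℕ) :
    0 ≤ excludedMass q V k :=
  sum_nonneg fun i _ => (hQ.pos k i).le

lemma volume_excludedPart_le (V : (k : ℕ) → Finset (Fin (N k + 1))) :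
    ∀ m n (ω : DigitSeq N), volume (excludedPart q V n ω (n + m)) ≤
      ENNReal.ofReal (cylLength q n ω * excludedMass q V (n + m))
  | 0, n, ω => by
    have hsub : excludedPart q V n ω n ⊆
        ⋃ d ∈ (V n)ᶜ, cylinder q (n + 1) (Function.update ω n d) := by
      simp only [excludedPart, Set.iUnion_subset_iff]
      rintro ω' ⟨hω', hV⟩
      rw [cylinder_congr q (update_mem_seqCylinder hω')]
      exact Set.subset_biUnion_of_mem (u := fun d => cylinder q (n + 1) (Function.update ω n d))
        (by simpa using hV)
    calc volume (excludedPart q V n ω n)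
        ≤ ∑ d ∈ (V n)ᶜ, volume (cylinder q (n + 1) (Function.update ω n d)) :=
          (measure_mono hsub).trans (measure_biUnion_finset_le _ _)
      _ = ENNReal.ofReal (cylLength q n ω * excludedMass q V n) := by
          simp only [volume_cylinder, cylLength_update, excludedMass, mul_sum]
          exact (ENNReal.ofReal_sum_of_nonneg fun d _ =>
            (mul_pos (cylLength_pos hQ n ω) (hQ.pos n d)).le).symm
  | m + 1, n, ω => by
    have hsub : excludedPart q V n ω (n + (m + 1)) ⊆
        ⋃ d, excludedPart q V (n + 1) (Function.update ω n d) (n + (m + 1)) := by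
      simp only [excludedPart, Set.iUnion_subset_iff]
      rintro ω' ⟨hω', hV⟩
      exact Set.subset_iUnion_of_subset (ω' n) (Set.subset_biUnion_of_mem
        (u := fun ω'' => cylinder q (n + (m + 1) + 1) ω'') ⟨update_mem_seqCylinder hω', hV⟩)
    calc volume (excludedPart q V n ω (n + (m + 1)))
        ≤ ∑ d, volume (excludedPart q V (n + 1) (Function.update ω n d) (n + (m + 1))) :=
          (measure_mono hsub).trans (measure_iUnion_fintype_le _ _)
      _ ≤ ∑ d, ENNReal.ofReal (cylLength q n ω * q n d * excludedMass q V (n + (m + 1))) := by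
          refine sum_le_sum fun d _ => ?_
          have ih := volume_excludedPart_le V m (n + 1) (Function.update ω n d)
          rwa [Nat.succ_add_eq_add_succ, cylLength_update] at ih
      _ = ENNReal.ofReal (cylLength q n ω * excludedMass q V (n + (m + 1))) := by
          rw [← ENNReal.ofReal_sum_of_nonneg fun d _ => mul_nonneg
            (mul_pos (cylLength_pos hQ n ω) (hQ.pos n d)).le (excludedMass_nonneg hQ V _),
            ← sum_mul, ← mul_sum, hQ.sum_eq_one, mul_one]

variable (hmax : Tendsto (fun n => ∏ k ∈ range n, ⨆ i, q k i) atTop (𝓝 0))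
include hmax

lemma eventually_cylLength_lt {ε : ℝ} (hε : 0 < ε) :
    ∀ᶠ n in atTop, ∀ ω : DigitSeq N, cylLength q n ω < ε :=
  (hmax.eventually_lt_const hε).mono fun n hn ω =>
    (cylLength_le_prod_iSup hQ n ω).trans_lt hn

lemma codingMap_eq_of_forall_mem {ω : DigitSeq N} {y : ℝ} (hy : ∀ n, y ∈ cylinder q n ω) :
    codingMap N q ω = y := by
  refine eq_of_forall_dist_le fun ε hε => ?_
  obtain ⟨n, hn⟩ := (eventually_cylLength_lt hQ hmax hε).exists
  have hx := codingMap_mem_cylinder hQ n ω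
  rw [Real.dist_eq, abs_le]
  constructor <;> linarith [hx.1, hx.2, (hy n).1, (hy n).2, hn ω]

lemma continuous_codingMap : Continuous (codingMap N q) := by
  refine TendstoUniformly.continuous (F := cylLeft q) (p := atTop) ?_
    (Frequently.of_forall (continuous_cylLeft q))
  refine Metric.tendstoUniformly_iff.2 fun ε hε => ?_
  filter_upwards [eventually_cylLength_lt hQ hmax hε] with n hn ω
  have hx := codingMap_mem_cylinder hQ n ω
  rw [Real.dist_eq, abs_lt]
  constructor <;> linarith [hx.1, hx.2, hn ω]

lemma exists_codingMap_eq {n : ℕ} {ω : DigitSeq N} {y : ℝ} (hy : y ∈ cylinder q n ω) :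
    ∃ ω' ∈ seqCylinder n ω, codingMap N q ω' = y := by
  set S : ℕ → Set (DigitSeq N) := fun m => seqCylinder n ω ∩ {ω' | y ∈ cylinder q (n + m) ω'}
  have hS_closed : ∀ m, IsClosed (S m) := fun m =>
    (isClosed_seqCylinder n ω).inter (isClosed_setOf_mem_cylinder q (n + m) y)
  have hS_anti : ∀ m, S (m + 1) ⊆ S m := fun m _ h =>
    ⟨h.1, cylinder_antitone hQ _ (Nat.le_succ (n + m)) h.2⟩
  have hS_ne : ∀ m, (S m).Nonempty := by
    intro m
    induction m with
    | zero => exact ⟨ω, fun _ _ => rfl, hy⟩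
    | succ m ih =>
      obtain ⟨ω', hω', hyω'⟩ := ih
      obtain ⟨d, hd⟩ := exists_update_mem_cylinder hQ hyω'
      exact ⟨_, fun k hk => (update_mem_seqCylinder_self (by omega) ω' d k hk).trans (hω' k hk), hd⟩
  obtain ⟨ω', hω'⟩ := IsCompact.nonempty_iInter_of_sequence_nonempty_isCompact_isClosed S
    hS_anti hS_ne (hS_closed 0).isCompact hS_closed
  rw [Set.mem_iInter] at hω'
  exact ⟨ω', (hω' 0).1, codingMap_eq_of_forall_mem hQ hmax fun m =>
    cylinder_antitone hQ ω' (Nat.le_add_left m n) (hω' m).2⟩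

lemma cylinder_subset_union (V : (k : ℕ) → Finset (Fin (N k + 1))) (n : ℕ) (ω : DigitSeq N) :
    cylinder q n ω ⊆ codingMap N q '' (seqCylinder n ω ∩ {ω' | ∀ k ≥ n, ω' k ∈ V k}) ∪
      ⋃ m, excludedPart q V n ω (n + m) := by
  intro y hy
  obtain ⟨ω', hω', rfl⟩ := exists_codingMap_eq hQ hmax hy
  by_cases h : ∀ k ≥ n, ω' k ∈ V k
  · exact Or.inl ⟨ω', ⟨hω', h⟩, rfl⟩
  · push Not at h
    obtain ⟨k, hk, hkV⟩ := h
    refine Or.inr (Set.mem_iUnion.2 ⟨k - n, ?_⟩)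
    rw [Nat.add_sub_cancel' hk]
    exact Set.mem_biUnion (x := ω') ⟨hω', hkV⟩ (codingMap_mem_cylinder hQ _ _)

lemma volume_QtSet_inter_cylinder_pos {V : (k : ℕ) → Finset (Fin (N k + 1))} {n : ℕ}
    {ω : DigitSeq N} (hω : ∀ k, ω k ∈ V k) (hV : Summable (excludedMass q V))
    (htail : ∑' m, excludedMass q V (m + n) < 1) :
    0 < volume (QtSet N q V ∩ cylinder q n ω) := by
  have hgood : codingMap N q '' (seqCylinder n ω ∩ {ω' | ∀ k ≥ n, ω' k ∈ V k}) ⊆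
      QtSet N q V ∩ cylinder q n ω := by
    rintro _ ⟨ω', ⟨hω', hV'⟩, rfl⟩
    refine ⟨⟨ω', fun k => ?_, rfl⟩, cylinder_congr q hω' ▸ codingMap_mem_cylinder hQ n ω'⟩
    rcases lt_or_ge k n with hk | hk
    · exact hω' k hk ▸ hω k
    · exact hV' k hk
  set L := cylLength q n ω
  set t := ∑' m, excludedMass q V (m + n)
  have hbad : volume (⋃ m, excludedPart q V n ω (n + m)) ≤ ENNReal.ofReal (L * t) :=
    calc volume (⋃ m, excludedPart q V n ω (n + m))
        ≤ ∑' m, ENNReal.ofReal (L * excludedMass q V (n + m)) :=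
          (measure_iUnion_le _).trans
            (ENNReal.tsum_le_tsum fun m => volume_excludedPart_le hQ V m n ω)
      _ = ENNReal.ofReal (L * t) := by
          have hsum : Summable fun m => excludedMass q V (n + m) := by
            simpa only [add_comm n] using (summable_nat_add_iff n).2 hV
          rw [← ENNReal.ofReal_tsum_of_nonneg
            (fun m => mul_nonneg (cylLength_pos hQ n ω).le (excludedMass_nonneg hQ V _))
            (hsum.mul_left L), tsum_mul_left]
          simp only [L, t, add_comm n]
  have hcover : ENNReal.ofReal L ≤ volume (QtSet N q V ∩ cylinder q n ω) + ENNReal.ofReal (L * t) :=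
    calc ENNReal.ofReal L = volume (cylinder q n ω) := (volume_cylinder q n ω).symm
      _ ≤ _ := measure_mono (cylinder_subset_union hQ hmax V n ω)
      _ ≤ _ := measure_union_le _ _
      _ ≤ _ := add_le_add (measure_mono hgood) hbad
  refine pos_iff_ne_zero.2 fun h0 => ?_
  rw [h0, zero_add, ENNReal.ofReal_le_ofReal_iff (mul_nonneg (cylLength_pos hQ n ω).le
    (tsum_nonneg fun m => excludedMass_nonneg hQ V _))] at hcover
  exact (mul_lt_of_lt_one_right (cylLength_pos hQ n ω) htail).not_ge hcover

lemma isCompact_QtSet (V : (k : ℕ) → Finset (Fin (N k + 1))) : IsCompact (QtSet N q V) := by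
  refine IsClosed.isCompact ?_ |>.image (continuous_codingMap hQ hmax)
  simp only [Set.ofPred_forall]
  exact isClosed_iInter fun k => (isClosed_discrete _).preimage (continuous_apply k)

lemma interior_QtSet_eq_empty {V : (k : ℕ) → Finset (Fin (N k + 1))}
    (hV : {k | ∃ i, i ∉ V k}.Infinite) : interior (QtSet N q V) = ∅ := by
  refine Set.eq_empty_iff_forall_notMem.2 fun x hx => ?_
  obtain ⟨ε, hε, hball⟩ := Metric.mem_nhds_iff.1 (mem_interior_iff_mem_nhds.1 hx)
  rw [Real.ball_eq_Ioo] at hball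
  obtain ⟨ω, -, rfl⟩ := interior_subset hx
  obtain ⟨n, hn⟩ := (eventually_cylLength_lt hQ hmax hε).exists
  obtain ⟨m, ⟨i, hi⟩, hnm⟩ := hV.exists_gt n
  set ω' := Function.update ω m i
  -- the whole cylinder of `ω'` of rank `m + 1` lies in the ball, but its interior misses the set
  have hsub : cylinder q (m + 1) ω' ⊆ Set.Ioo (codingMap N q ω - ε) (codingMap N q ω + ε) := by
    refine (cylinder_antitone hQ ω' (by omega : n ≤ m + 1)).trans ?_
    change cylinder q n ω' ⊆ _
    rw [cylinder_congr q (update_mem_seqCylinder_self hnm.le ω i : ω' ∈ seqCylinder n ω)]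
    exact cylinder_subset_Ioo q (codingMap_mem_cylinder hQ n ω) (hn ω)
  obtain ⟨y, hy⟩ := Set.nonempty_Ioo.2 (lt_add_of_pos_right _ (cylLength_pos hQ (m + 1) ω'))
  exact notMem_QtSet_of_mem_Ioo hQ (by simpa [ω'] using hi) hy
    (hball (hsub (Set.Ioo_subset_Icc_self hy)))

end Cylinders

noncomputable def posDigits (p : (k : ℕ) → Fin (N k + 1) → ℝ) (k : ℕ) : Finset (Fin (N k + 1)) :=
  {i | p k i ≠ 0}

lemma excludedMass_posDigits (p q : (k : ℕ) → Fin (N k + 1) → ℝ) (k : ℕ) :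
    excludedMass q (posDigits p) k = ∑ i, if p k i = 0 then q k i else 0 := by
  rw [excludedMass, ← sum_filter]
  congr 1
  ext i
  simp [posDigits]

lemma measure_compl_admissible_eq_zero {p : (k : ℕ) → Fin (N k + 1) → ℝ}
    {μ : Measure (DigitSeq N)} (hμ : ∀ n ω, μ (seqCylinder n ω) =
      ENNReal.ofReal (∏ k ∈ range n, p k (ω k))) :
    μ {ω | ∀ k, ω k ∈ posDigits p k}ᶜ = 0 := by
  refine measure_null_of_locally_null _ fun ω hω => ?_
  obtain ⟨k, hk⟩ : ∃ k, p k (ω k) = 0 := by simpa [posDigits] using hω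
  refine ⟨seqCylinder (k + 1) ω,
    mem_nhdsWithin_of_mem_nhds ((isOpen_seqCylinder _ ω).mem_nhds fun _ _ => rfl), ?_⟩
  rw [hμ, prod_eq_zero (mem_range.2 k.lt_succ_self) hk, ENNReal.ofReal_zero]

end QExpansion

lemma msupport_subset_of_isClosed {μ : Measure ℝ} {F : Set ℝ} (hF : IsClosed F)
    (hμF : μ Fᶜ = 0) : msupport μ ⊆ F := by
  intro x hx
  by_contra hxF
  obtain ⟨ε, hε, hball⟩ := Metric.isOpen_iff.1 hF.isOpen_compl x hxF
  exact hx ε hε (measure_mono_null (Real.ball_eq_Ioo x ε ▸ hball) hμF)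

open QExpansion

open scoped Classical in
theorem support_P_type_general (N : ℕ → ℕ) (p q : (k : ℕ) → Fin (N k + 1) → ℝ)
    (μ : Measure ((k : ℕ) → Fin (N k + 1))) [IsProbabilityMeasure μ]
    (hq : ∀ k i, 0 < q k i)
    (hqs : ∀ k, ∑ i, q k i = 1)
    (hmax : Tendsto (fun n => ∏ k ∈ Finset.range n, ⨆ i, q k i) atTop (nhds 0))
    (hμ : ∀ (n : ℕ) (ω : (k : ℕ) → Fin (N k + 1)),
      μ {x | ∀ k < n, x k = ω k} = ENNReal.ofReal (∏ k ∈ Finset.range n, p k (ω k)))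
    (μξ : Measure ℝ) (hμξ : μξ = Measure.map (codingMap N q) μ)
    (hinf : {k | ∃ i, p k i = 0}.Infinite)
    (hconv : Summable (fun k => ∑ i, if p k i = 0 then q k i else 0)) :
    IsNowhereDense (msupport μξ) ∧
    ∃ P : Set ℝ, μξ P = 1 ∧
      ∀ x ∈ P, ∀ ε > 0, 0 < volume (P ∩ Set.Ioo (x - ε) (x + ε)) := by
  have hQ : IsPositiveStochastic q := ⟨hq, hqs⟩
  have hcont := continuous_codingMap hQ hmax
  have hP_closed := (isCompact_QtSet hQ hmax (posDigits p)).isClosed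
  subst hμξ
  have hP_null : μ.map (codingMap N q) (QtSet N q (posDigits p))ᶜ = 0 := by
    rw [Measure.map_apply hcont.measurable hP_closed.isOpen_compl.measurableSet]
    exact measure_mono_null (fun ω hω hω' => hω ⟨ω, hω', rfl⟩)
      (measure_compl_admissible_eq_zero hμ)
  have := Measure.isProbabilityMeasure_map (μ := μ) hcont.aemeasurable
  refine ⟨(hP_closed.isNowhereDense_iff.2 (interior_QtSet_eq_empty hQ hmax ?_)).mono
    (msupport_subset_of_isClosed hP_closed hP_null), _,
    (prob_compl_eq_zero_iff hP_closed.measurableSet).1 hP_null, ?_⟩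
  · simpa [posDigits] using hinf
  rintro _ ⟨ω, hω, rfl⟩ ε hε
  obtain ⟨n, hn, htail⟩ := ((eventually_cylLength_lt hQ hmax hε).and
    ((tendsto_sum_nat_add (excludedMass q (posDigits p))).eventually_lt_const one_pos)).exists
  refine (volume_QtSet_inter_cylinder_pos hQ hmax hω ?_ htail).trans_le (measure_mono
    (Set.inter_subset_inter_right _ (cylinder_subset_Ioo q (codingMap_mem_cylinder hQ n ω) (hn ω))))
  convert hconv using 1
  exact funext (excludedMass_posDigits p q)

open scoped Classical in
/-- Theorem 3, case 3): if the matrix `P̃` has infinitely many columns with a zero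
entry, and `∑_k ∑_{i : p_{ik} = 0} q_{ik} < ∞`, then the topological support of
`μ_ξ` is nowhere dense, yet `μ_ξ` is supported by a set `P` every neighbourhood of
each of whose points meets `P` in positive Lebesgue measure, i.e. `μ_ξ` is of pure
P-type. -/
theorem support_P_type (N : ℕ → ℕ) (p q : (k : ℕ) → Fin (N k + 1) → ℝ)
    (μ : Measure ((k : ℕ) → Fin (N k + 1))) [IsProbabilityMeasure μ]
    (hp : ∀ k i, 0 ≤ p k i) (hq : ∀ k i, 0 < q k i)
    (hps : ∀ k, ∑ i, p k i = 1) (hqs : ∀ k, ∑ i, q k i = 1)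
    (hmax : Tendsto (fun n => ∏ k ∈ Finset.range n, ⨆ i, q k i) atTop (nhds 0))
    (hμ : ∀ (n : ℕ) (ω : (k : ℕ) → Fin (N k + 1)),
      μ {x | ∀ k < n, x k = ω k} = ENNReal.ofReal (∏ k ∈ Finset.range n, p k (ω k)))
    (μξ : Measure ℝ) (hμξ : μξ = Measure.map (codingMap N q) μ)
    (hinf : {k | ∃ i, p k i = 0}.Infinite)
    (hconv : Summable (fun k => ∑ i, if p k i = 0 then q k i else 0)) :
    IsNowhereDense (msupport μξ) ∧
    ∃ P : Set ℝ, μξ P = 1 ∧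
      ∀ x ∈ P, ∀ ε > 0, 0 < volume (P ∩ Set.Ioo (x - ε) (x + ε)) :=
  support_P_type_general N p q μ hq hqs hmax hμ μξ hμξ hinf hconv
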